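/- arXiv:2307.11625 — 2 statements merged into one kernel-verified Lean document; each statement's English description precedes it below -/
import Mathlib

section
/- Let D be a loopless digraph in which every vertex has indegree at most i and outdegree at most 2, and let G be its competition graph. Then G is chordal if and only if D contains no ⟨2̄,2̄⟩ good subdigraph, i.e., no subdigraph D' that is loopless with all indegrees and outdegrees equal to 0 or 2, is irredundant, has at least one arc, and whose competition graph contains no triangle. -/
/-- The competition graph of a digraph `D`: `u` and `v` are adjacent iff they are
distinct and have a common out-neighbor. -/
def compGraph {V : Type*} (D : V → V → Prop) : SimpleGraph V where
  Adj u v := u ≠ v ∧ ∃ w, D u w ∧ D v w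
  symm := by
    constructor
    rintro u v ⟨h, w, h1, h2⟩
    exact ⟨h.symm, w, h2, h1⟩
  loopless := by
    constructor
    rintro u ⟨h, -⟩
    exact h rfl

/-- A loopless digraph with every indegree ≤ i and every outdegree ≤ j. -/
def IsIJDigraph {V : Type*} (D : V → V → Prop) (i j : ℕ) : Prop :=
  (∀ v, ¬ D v v) ∧ (∀ v, {u | D u v}.ncard ≤ i) ∧ (∀ u, {w | D u w}.ncard ≤ j)

/-- `G` is an ⟨i,j⟩ competition graph. -/
def IsIJCompGraph {V : Type*} (G : SimpleGraph V) (i j : ℕ) : Prop :=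
  ∃ D : V → V → Prop, IsIJDigraph D i j ∧ compGraph D = G

/-- A graph is chordal iff it has no induced cycle (hole) of length at least 4. -/
def IsChordal {V : Type*} (G : SimpleGraph V) : Prop :=
  ∀ n, 4 ≤ n → IsEmpty (SimpleGraph.cycleGraph n ↪g G)

/-- `D'` is a ⟨2̄,2̄⟩ good digraph: every indegree and outdegree is 0 or 2,
it is irredundant, its competition graph is triangle-free, and it has an arc. -/
def IsGoodDigraph {V : Type*} (D : V → V → Prop) : Prop :=
  (∀ v, ¬ D v v) ∧
  (∀ v, {u | D u v}.ncard = 0 ∨ {u | D u v}.ncard = 2) ∧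
  (∀ u, {w | D u w}.ncard = 0 ∨ {w | D u w}.ncard = 2) ∧
  (∀ u v, u ≠ v → {w | D u w ∧ D v w}.ncard ≤ 1) ∧
  (compGraph D).CliqueFree 3 ∧
  (∃ u v, D u v)

/-!
If `D' ⊆ D` is good, a vertex `v` of positive outdegree in `D'` has out-neighbours `x ≠ y`, each
with exactly one further in-neighbour, and these two are distinct by irredundancy; they are the
only neighbours of `v` in `C(D')`. So `C(D')` is a disjoint union of cycles, none a triangle, and
any such cycle is induced. Its vertices have outdegree two in `D'`, hence the same out-neighbours
in `D`, so it is a hole of `C(D)`.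

Conversely, for a hole `f 0, …, f (n - 1)` of `C(D)` pick a common out-neighbour `w k` of `f k`
and `f (k + 1)`; the arcs `f k → w k ← f (k + 1)` form a good subdigraph, the `w k` being distinct
because the hole has no triangle.
-/

open SimpleGraph

section

variable {V : Type*}

lemma Fin.one_two_three_ne_zero (n : ℕ) :
    (1 : Fin (n + 4)) ≠ 0 ∧ (2 : Fin (n + 4)) ≠ 0 ∧ (3 : Fin (n + 4)) ≠ 0 := by
  simp [Fin.ext_iff, Nat.mod_eq_of_lt]

lemma Fin.sub_one_ne_add_one {n : ℕ} (a : Fin (n + 3)) : a - 1 ≠ a + 1 := by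
  rw [Ne, sub_eq_iff_eq_add, add_assoc, left_eq_add]
  exact ne_of_beq_false rfl

theorem cycleGraph_cliqueFree_three (n : ℕ) : (cycleGraph (n + 4)).CliqueFree 3 := by
  intro t ht
  obtain ⟨a, b, c, hab, hac, hbc, rfl⟩ := Finset.card_eq_three.mp ht.card_eq
  obtain ⟨h1, h2, h3⟩ := is3Clique_triple_iff.mp ht
  rw [cycleGraph_adj] at h1 h2 h3
  have := Fin.one_two_three_ne_zero n
  grind

lemma Set.ncard_eq_two_of_mem [Finite V] {s : Set V} (hs : s.ncard = 0 ∨ s.ncard = 2) {a : V}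
    (ha : a ∈ s) : s.ncard = 2 :=
  hs.resolve_left fun h => by rw [Set.ncard_eq_zero] at h; simp [h] at ha

lemma Set.eq_pair_of_ncard_eq_two {s : Set V} (hs : s.ncard = 2) {a b : V} (ha : a ∈ s)
    (hb : b ∈ s) (hab : a ≠ b) : s = {a, b} :=
  (Set.eq_of_subset_of_ncard_le (Set.insert_subset ha (Set.singleton_subset_iff.mpr hb))
    (by rw [hs, Set.ncard_pair hab]) (Set.finite_of_ncard_ne_zero (by omega))).symm

lemma compGraph_adj {D : V → V → Prop} {u v : V} :
    (compGraph D).Adj u v ↔ u ≠ v ∧ ∃ w, D u w ∧ D v w := Iff.rfl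

lemma compGraph_adj_congr {D D' : V → V → Prop} {u v : V} (hu : ∀ t, D u t ↔ D' u t)
    (hv : ∀ t, D v t ↔ D' v t) : (compGraph D).Adj u v ↔ (compGraph D').Adj u v := by
  simp only [compGraph_adj, hu, hv]

theorem compGraph_isCycles [Finite V] {D : V → V → Prop}
    (hin : ∀ v, {u | D u v}.ncard = 0 ∨ {u | D u v}.ncard = 2)
    (hout : ∀ u, {w | D u w}.ncard = 0 ∨ {w | D u w}.ncard = 2)
    (hirr : ∀ u v, u ≠ v → {w | D u w ∧ D v w}.ncard ≤ 1) : (compGraph D).IsCycles := by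
  rintro v ⟨w, hvw, x, hvx, hwx⟩
  have hout_v := Set.ncard_eq_two_of_mem (hout v) hvx
  obtain ⟨y, hvy, hyx⟩ := Set.exists_ne_of_one_lt_ncard (by omega : 1 < {t | D v t}.ncard) x
  have hin_y := Set.ncard_eq_two_of_mem (hin y) hvy
  obtain ⟨z, hzy, hzv⟩ := Set.exists_ne_of_one_lt_ncard (by omega : 1 < {u | D u y}.ncard) v
  have hx : ∀ u, D u x ↔ u = v ∨ u = w := fun u => by
    simpa using Set.ext_iff.mp
      (Set.eq_pair_of_ncard_eq_two (Set.ncard_eq_two_of_mem (hin x) hvx) hvx hwx hvw) u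
  have hy : ∀ u, D u y ↔ u = v ∨ u = z := fun u => by
    simpa using Set.ext_iff.mp (Set.eq_pair_of_ncard_eq_two hin_y hvy hzy hzv.symm) u
  have hv : ∀ t, D v t ↔ t = x ∨ t = y := fun t => by
    simpa using Set.ext_iff.mp (Set.eq_pair_of_ncard_eq_two hout_v hvx hvy hyx.symm) t
  -- `w = z` would make `x` and `y` two common out-neighbours of `v` and `w`
  have hwz : w ≠ z := by
    rintro rfl
    have hsub : ({x, y} : Set V) ⊆ {t | D v t ∧ D w t} :=
      Set.insert_subset ⟨hvx, hwx⟩ (Set.singleton_subset_iff.mpr ⟨hvy, hzy⟩)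
    have := Set.ncard_le_ncard hsub (Set.toFinite _)
    have := hirr v w hvw
    rw [Set.ncard_pair hyx.symm] at *
    omega
  suffices (compGraph D).neighborSet v = {w, z} by rw [this, Set.ncard_pair hwz]
  ext u
  simp only [mem_neighborSet, compGraph_adj, hv, or_and_right, exists_or, exists_eq_left, hx, hy,
    Set.mem_insert_iff, Set.mem_singleton_iff]
  grind

theorem SimpleGraph.IsCycles.adj_copy_cycleGraph_iff {G : SimpleGraph V} (hG : G.IsCycles) {n : ℕ}
    (f : Copy (cycleGraph (n + 3)) G) {a b : Fin (n + 3)} :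
    G.Adj (f a) (f b) ↔ (cycleGraph (n + 3)).Adj a b := by
  refine ⟨fun hab => ?_, f.toHom.map_adj⟩
  rw [cycleGraph_adj, sub_eq_iff_eq_add', sub_eq_iff_eq_add']
  by_cases hb : b = a + 1
  · exact Or.inr hb
  have hsucc : G.Adj (f a) (f (a + 1)) := f.toHom.map_adj (by simp [cycleGraph_adj])
  have hpred : G.Adj (f a) (f (a - 1)) := f.toHom.map_adj (by simp [cycleGraph_adj])
  obtain ⟨_, -, huniq⟩ := hG.existsUnique_ne_adj hsucc
  have hb' := (huniq _ ⟨f.injective.ne (Ne.symm hb), hab⟩).trans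
    (huniq _ ⟨f.injective.ne (Fin.sub_one_ne_add_one a).symm, hpred⟩).symm
  left
  rw [f.injective.eq_iff.mp hb', sub_add_cancel]

theorem SimpleGraph.IsCycles.exists_embedding_cycleGraph [Finite V] {G : SimpleGraph V}
    (hG : G.IsCycles) {v : V} (hv : (G.neighborSet v).Nonempty) :
    ∃ n, Nonempty (cycleGraph (n + 3) ↪g G) := by
  obtain ⟨p, hp, -⟩ := hG.exists_cycle_toSubgraph_verts_eq_connectedComponentSupp
    (c := G.connectedComponentMk v) rfl hv
  obtain ⟨n, hn⟩ : ∃ n, p.length = n + 3 :=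
    ⟨p.length - 3, by have := hp.three_le_length; omega⟩
  obtain ⟨f⟩ := (cycleGraph_isContained_iff (by omega)).mpr ⟨v, p, hp, hn⟩
  exact ⟨n, ⟨f.toEmbedding, hG.adj_copy_cycleGraph_iff f⟩⟩

theorem not_isChordal_of_isGoodDigraph [Finite V] {D D' : V → V → Prop}
    (hD'D : ∀ u v, D' u v → D u v) (hout : ∀ u, {w | D u w}.ncard ≤ 2)
    (hgood : IsGoodDigraph D') : ¬ IsChordal (compGraph D) := by
  obtain ⟨-, hin', hout', hirr', htri, u, x, hux⟩ := hgood
  have hcyc := compGraph_isCycles hin' hout' hirr'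
  obtain ⟨u', hu'x, hu'u⟩ := Set.exists_ne_of_one_lt_ncard
    (by have := Set.ncard_eq_two_of_mem (hin' x) hux; omega : 1 < {v | D' v x}.ncard) u
  obtain ⟨n, ⟨e⟩⟩ := hcyc.exists_embedding_cycleGraph (v := u) ⟨u', hu'u.symm, x, hux, hu'x⟩
  obtain _ | n := n
  · exact absurd htri ((not_cliqueFree_iff_top_isContained 3).mpr
      ⟨(cycleGraph_three_eq_top ▸ e.toCopy : Copy ⊤ _)⟩)
  -- `D'` already gives each hole vertex two out-neighbours, the most `D` allows
  have hsame : ∀ a, {t | D (e a) t} = {t | D' (e a) t} := fun a => by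
    obtain ⟨-, t, ht, -⟩ := e.map_adj_iff.mpr (show (cycleGraph (n + 4)).Adj a (a + 1) by
      simp [cycleGraph_adj])
    exact (Set.eq_of_subset_of_ncard_le (s := {t | D' (e a) t}) (fun t => hD'D _ t)
      (by rw [Set.ncard_eq_two_of_mem (hout' _) ht]; exact hout _) (Set.toFinite _)).symm
  intro hchordal
  exact (hchordal (n + 4) (by omega)).false ⟨e.toEmbedding, fun {a b} => by
    rw [← e.map_adj_iff]
    exact compGraph_adj_congr (Set.ext_iff.mp (hsame a)) (Set.ext_iff.mp (hsame b))⟩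

section HoleDigraph

variable {D : V → V → Prop} {n : ℕ}

def holeDigraph (f w : Fin (n + 4) → V) (u x : V) : Prop :=
  ∃ k, (u = f k ∨ u = f (k + 1)) ∧ x = w k

variable (f : cycleGraph (n + 4) ↪g compGraph D) {w : Fin (n + 4) → V}

lemma holeDigraph_le (hw : ∀ k, D (f k) (w k) ∧ D (f (k + 1)) (w k)) {u x : V}
    (h : holeDigraph f w u x) : D u x := by
  obtain ⟨k, rfl | rfl, rfl⟩ := h
  exacts [(hw k).1, (hw k).2]

lemma eq_or_adj_of_hole {a b : Fin (n + 4)} {x : V} (ha : D (f a) x) (hb : D (f b) x) :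
    a = b ∨ a - b = 1 ∨ b - a = 1 := by
  by_cases hab : a = b
  · exact Or.inl hab
  · exact Or.inr (f.map_adj_iff.mp ⟨f.injective.ne hab, x, ha, hb⟩)

-- otherwise `f j`, `f (j + 1)`, `f k` and `f (k + 1)` would span a triangle of the hole
lemma injective_of_hole (hw : ∀ k, D (f k) (w k) ∧ D (f (k + 1)) (w k)) :
    Function.Injective w := by
  intro j k hjk
  have h1 := eq_or_adj_of_hole f (hw j).1 (hjk ▸ (hw k).1)
  have h2 := eq_or_adj_of_hole f (hw j).2 (hjk ▸ (hw k).1)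
  have h3 := eq_or_adj_of_hole f (hw j).1 (hjk ▸ (hw k).2)
  have := Fin.one_two_three_ne_zero n
  grind

lemma holeDigraph_apply_iff {a : Fin (n + 4)} {x : V} :
    holeDigraph f w (f a) x ↔ x = w a ∨ x = w (a - 1) := by
  simp only [holeDigraph, f.injective.eq_iff]
  grind

variable {f}

lemma holeDigraph_apply_right_iff (hw : Function.Injective w) {u : V} {k : Fin (n + 4)} :
    holeDigraph f w u (w k) ↔ u = f k ∨ u = f (k + 1) := by
  simp [holeDigraph, hw.eq_iff]

lemma ncard_setOf_holeDigraph_out (hw : Function.Injective w) (u : V) :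
    {x | holeDigraph f w u x}.ncard = 0 ∨ {x | holeDigraph f w u x}.ncard = 2 := by
  by_cases hu : ∃ a, u = f a
  · obtain ⟨a, rfl⟩ := hu
    right
    have ha : a ≠ a - 1 := by rw [ne_comm, Ne, sub_eq_self]; exact one_ne_zero
    rw [show {x | holeDigraph f w (f a) x} = {w a, w (a - 1)} by ext; exact holeDigraph_apply_iff f,
      Set.ncard_pair (hw.ne ha)]
  · left
    convert Set.ncard_empty V
    refine Set.eq_empty_of_forall_notMem fun x ⟨k, hk, _⟩ => ?_
    rcases hk with rfl | rfl
    exacts [hu ⟨k, rfl⟩, hu ⟨k + 1, rfl⟩]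

lemma ncard_setOf_holeDigraph_in (hw : Function.Injective w) (x : V) :
    {u | holeDigraph f w u x}.ncard = 0 ∨ {u | holeDigraph f w u x}.ncard = 2 := by
  by_cases hx : ∃ k, x = w k
  · obtain ⟨k, rfl⟩ := hx
    right
    have hk : k ≠ k + 1 := by simp
    rw [show {u | holeDigraph f w u (w k)} = {f k, f (k + 1)} by
      ext; exact holeDigraph_apply_right_iff hw, Set.ncard_pair (f.injective.ne hk)]
  · left
    convert Set.ncard_empty V
    exact Set.eq_empty_of_forall_notMem fun u ⟨k, _, hk⟩ => hx ⟨k, hk⟩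

lemma holeDigraph_irredundant (hw : Function.Injective w) {u v : V} (huv : u ≠ v) :
    {x | holeDigraph f w u x ∧ holeDigraph f w v x}.ncard ≤ 1 := by
  have hsub : {x | holeDigraph f w u x ∧ holeDigraph f w v x}.Subsingleton := by
    rintro _ ⟨⟨k, hku, rfl⟩, hkv⟩ _ ⟨⟨l, hlu, rfl⟩, hlv⟩
    rw [holeDigraph_apply_right_iff hw] at hkv hlv
    have := Fin.one_two_three_ne_zero n
    have hf := f.injective
    grind
  exact (Set.ncard_le_one hsub.finite).mpr hsub

lemma compGraph_holeDigraph_le (hw : Function.Injective w) :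
    compGraph (holeDigraph f w) ≤ (cycleGraph (n + 4)).map f.toEmbedding := by
  rintro u v ⟨huv, x, ⟨k, hu, rfl⟩, ⟨l, hv, hkl⟩⟩
  obtain rfl := hw hkl
  rw [map_adj]
  rcases hu with rfl | rfl <;> rcases hv with rfl | rfl
  · exact absurd rfl huv
  · exact ⟨k, k + 1, by simp [cycleGraph_adj], rfl, rfl⟩
  · exact ⟨k + 1, k, by simp [cycleGraph_adj], rfl, rfl⟩
  · exact absurd rfl huv

theorem isGoodDigraph_holeDigraph (hloop : ∀ v, ¬ D v v)
    (hw : ∀ k, D (f k) (w k) ∧ D (f (k + 1)) (w k)) : IsGoodDigraph (holeDigraph f w) := by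
  have hinj := injective_of_hole f hw
  refine ⟨fun v h => hloop v (holeDigraph_le f hw h), ncard_setOf_holeDigraph_in hinj,
    ncard_setOf_holeDigraph_out hinj, fun u v => holeDigraph_irredundant hinj,
    ((cliqueFree_map_iff.mpr (cycleGraph_cliqueFree_three n)).anti
      (compGraph_holeDigraph_le hinj)), f 0, w 0, 0, Or.inl rfl, rfl⟩

end HoleDigraph

theorem exists_isGoodDigraph_of_hole {D : V → V → Prop} (hloop : ∀ v, ¬ D v v) {n : ℕ}
    (f : cycleGraph (n + 4) ↪g compGraph D) :
    ∃ D' : V → V → Prop, (∀ u v, D' u v → D u v) ∧ IsGoodDigraph D' := by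
  choose w hw using fun k => (f.map_adj_iff.mpr (show (cycleGraph (n + 4)).Adj k (k + 1) by
    simp [cycleGraph_adj])).2
  exact ⟨holeDigraph f w, fun _ _ => holeDigraph_le f hw, isGoodDigraph_holeDigraph hloop hw⟩

end

theorem stmt13 {V : Type*} [Fintype V] (D : V → V → Prop) (i : ℕ)
    (hD : IsIJDigraph D i 2) :
    IsChordal (compGraph D) ↔
      ∀ D' : V → V → Prop, (∀ u v, D' u v → D u v) → ¬ IsGoodDigraph D' := by
  obtain ⟨hloop, -, hout⟩ := hD
  refine ⟨fun hchordal D' hD'D hgood => not_isChordal_of_isGoodDigraph hD'D hout hgood hchordal,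
    fun h n hn => ⟨fun f => ?_⟩⟩
  obtain ⟨m, rfl⟩ : ∃ m, n = m + 4 := ⟨n - 4, by omega⟩
  obtain ⟨D', hD'D, hgood⟩ := exists_isGoodDigraph_of_hole hloop f
  exact h D' hD'D hgood
end

section
/- Let i, j, k, l be positive integers with i = k ≥ 2 and j > l. Then every ⟨k,l⟩ competition graph is an ⟨i,j⟩ competition graph, and there exists an ⟨i,j⟩ competition graph that is not a ⟨k,l⟩ competition graph; i.e., the family of ⟨k,l⟩ competition graphs is strictly contained in the family of ⟨i,j⟩ competition graphs. -/
/-!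
Raising the outdegree bound can only help, which gives the inclusion. For strictness, take
`l + 1` leaves, each with a private sink, and a centre pointing at every sink: this is a
⟨2, l + 1⟩ digraph whose competition graph is a star with `l + 1` pairwise nonadjacent leaves
(plus isolated sinks). In a competition graph, a vertex adjacent to pairwise nonadjacent
vertices needs a different common out-neighbour with each of them, so the centre of the star
forces outdegree at least `l + 1`.
-/

theorem IsIJDigraph.mono {V : Type*} {D : V → V → Prop} {i j i' j' : ℕ}
    (hD : IsIJDigraph D i j) (hi : i ≤ i') (hj : j ≤ j') : IsIJDigraph D i' j' :=
  ⟨hD.1, fun v => (hD.2.1 v).trans hi, fun u => (hD.2.2 u).trans hj⟩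

theorem IsIJCompGraph.mono {V : Type*} {G : SimpleGraph V} {i j i' j' : ℕ}
    (hG : IsIJCompGraph G i j) (hi : i ≤ i') (hj : j ≤ j') : IsIJCompGraph G i' j' :=
  let ⟨D, hD, hDG⟩ := hG
  ⟨D, hD.mono hi hj, hDG⟩

section Equiv

variable {V W : Type*} (f : W ≃ V) {D : V → V → Prop}

theorem IsIJDigraph.comap_equiv {i j : ℕ} (hD : IsIJDigraph D i j) :
    IsIJDigraph (fun u w => D (f u) (f w)) i j := by
  have hpre : ∀ s : Set V, (f ⁻¹' s).ncard = s.ncard := fun s =>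
    Set.ncard_preimage_of_injective_subset_range f.injective (by simp)
  refine ⟨fun v => hD.1 (f v), fun v => ?_, fun u => ?_⟩
  · exact (hpre {u | D u (f v)}).trans_le (hD.2.1 (f v))
  · exact (hpre {w | D (f u) w}).trans_le (hD.2.2 (f u))

theorem compGraph_comap_equiv :
    compGraph (fun u w => D (f u) (f w)) = (compGraph D).comap f := by
  ext u v
  simp only [compGraph, SimpleGraph.comap_adj, f.injective.ne_iff]
  exact and_congr_right fun _ => f.exists_congr_left.trans (by simp)

end Equiv

theorem IsIJCompGraph.of_iso {V W : Type*} {G : SimpleGraph V} {G' : SimpleGraph W} {i j : ℕ}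
    (e : G ≃g G') (hG : IsIJCompGraph G i j) : IsIJCompGraph G' i j := by
  obtain ⟨D, hD, rfl⟩ := hG
  refine ⟨_, hD.comap_equiv e.symm.toEquiv, ?_⟩
  rw [compGraph_comap_equiv]
  ext u v
  exact e.symm.map_adj_iff

theorem SimpleGraph.Iso.isIJCompGraph_iff {V W : Type*} {G : SimpleGraph V}
    {G' : SimpleGraph W} {i j : ℕ} (e : G ≃g G') : IsIJCompGraph G i j ↔ IsIJCompGraph G' i j :=
  ⟨.of_iso e, .of_iso e.symm⟩

theorem IsIJCompGraph.ncard_le_of_isIndepSet {V : Type*} [Finite V] {G : SimpleGraph V}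
    {i j : ℕ} (hG : IsIJCompGraph G i j) {c : V} {S : Set V} (hSc : S ⊆ G.neighborSet c)
    (hS : G.IsIndepSet S) : S.ncard ≤ j := by
  obtain ⟨D, hD, rfl⟩ := hG
  have hcommon : ∀ v ∈ S, ∃ w, D c w ∧ D v w := fun v hv => (hSc hv).2
  choose! w hcw hvw using hcommon
  have hinj : S.InjOn w := fun x hx y hy hxy => by
    by_contra hne
    exact hS hx hy hne ⟨hne, w x, hvw x hx, hxy ▸ hvw y hy⟩
  exact (Set.ncard_le_ncard_of_injOn w hcw hinj).trans (hD.2.2 c)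

/-- Vertices are the centre `none`, the leaves `some (inl a)` and the sinks `some (inr a)`. -/
def pendantStar (α : Type*) (u w : Option (α ⊕ α)) : Prop :=
  ∃ a, w = some (.inr a) ∧ (u = none ∨ u = some (.inl a))

section PendantStar

variable (α : Type*)

theorem isIJDigraph_pendantStar [Finite α] [Nonempty α] :
    IsIJDigraph (pendantStar α) 2 (Nat.card α) := by
  refine ⟨?_, fun v => ?_, fun u => ?_⟩
  · rintro v ⟨a, hv, h | h⟩ <;> simp [hv] at h
  · rcases v with _ | _ | a
    · simp [pendantStar]
    · simp [pendantStar]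
    · calc {u | pendantStar α u (some (.inr a))}.ncard
          ≤ ({none, some (.inl a)} : Set (Option (α ⊕ α))).ncard :=
            Set.ncard_le_ncard (by simp [pendantStar, Set.subset_def]) (Set.toFinite _)
        _ = 2 := Set.ncard_pair (by simp)
  · rcases u with _ | a | a
    · have : {w | pendantStar α none w} = Set.range (some ∘ Sum.inr) := by
        ext w; simp [pendantStar, eq_comm]
      rw [this, Set.ncard_range_of_injective ((Option.some_injective _).comp Sum.inr_injective)]
    · have : {w | pendantStar α (some (.inl a)) w} = {some (.inr a)} := by
        ext w; simp [pendantStar]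
      rw [this, Set.ncard_singleton]
      exact Nat.card_pos
    · simp [pendantStar]

theorem pendantStar_leaves_subset_neighborSet :
    Set.range (some ∘ Sum.inl) ⊆ (compGraph (pendantStar α)).neighborSet none := by
  rintro - ⟨a, rfl⟩
  exact ⟨by simp, some (.inr a), ⟨a, rfl, .inl rfl⟩, ⟨a, rfl, .inr rfl⟩⟩

theorem isIndepSet_pendantStar_leaves :
    (compGraph (pendantStar α)).IsIndepSet (Set.range (some ∘ Sum.inl)) := by
  rintro - ⟨a, rfl⟩ - ⟨b, rfl⟩ hab ⟨-, w, ⟨a', rfl, ha⟩, ⟨b', hb', hb⟩⟩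
  simp only [Option.some.injEq, Sum.inr.injEq] at hb'
  subst hb'
  simp_all

end PendantStar

theorem stmt19_general (i j k l : ℕ) (hik : i = k) (hk : 2 ≤ k) (hjl : l < j) :
    (∀ (n : ℕ) (G : SimpleGraph (Fin n)),
        IsIJCompGraph G k l → IsIJCompGraph G i j) ∧
      (∃ (n : ℕ) (G : SimpleGraph (Fin n)),
        IsIJCompGraph G i j ∧ ¬ IsIJCompGraph G k l) := by
  subst hik
  refine ⟨fun n G hG => hG.mono le_rfl hjl.le, ?_⟩
  set G := compGraph (pendantStar (Fin (l + 1)))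
  have hGi : IsIJCompGraph G i j :=
    ⟨_, (isIJDigraph_pendantStar _).mono hk (by simpa using hjl), rfl⟩
  have hGl : ¬ IsIJCompGraph G i l := fun h => by
    have := h.ncard_le_of_isIndepSet (pendantStar_leaves_subset_neighborSet _)
      (isIndepSet_pendantStar_leaves _)
    rw [Set.ncard_range_of_injective ((Option.some_injective _).comp Sum.inl_injective)] at this
    simp at this
  have e := G.overFinIso rfl
  exact ⟨_, _, e.isIJCompGraph_iff.1 hGi, e.isIJCompGraph_iff.not.1 hGl⟩

theorem stmt19 (i j k l : ℕ) (hik : i = k) (hk : 2 ≤ k) (hl : 1 ≤ l) (hjl : l < j) :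
    (∀ (n : ℕ) (G : SimpleGraph (Fin n)),
        IsIJCompGraph G k l → IsIJCompGraph G i j) ∧
      (∃ (n : ℕ) (G : SimpleGraph (Fin n)),
        IsIJCompGraph G i j ∧ ¬ IsIJCompGraph G k l) :=
  stmt19_general i j k l hik hk hjl
end
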